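/- arXiv:2604.13096 — 5 statements merged into one kernel-verified Lean document; each statement's English description precedes it below -/
import Mathlib

section
/- Closed-form expected return for the closed-chain qubit model: let N ≥ 1 and x₊, x₋ ∈ ℝ. Define the step weight q(true,true) = 1−x₊, q(true,false) = x₊, q(false,true) = x₋, q(false,false) = 1−x₋. Then Σ over all binary trajectories ψ : Fin (N+1) → Bool with ψ(0) = ψ(N) = true of [((p(ψ)−1)·x₊ − (N+1−p(ψ))·x₋) · ∏_{i<N} q(ψ(i), ψ(i+1))] equals Σ_{p=2}^{N} Σ_{c=1}^{min(p−1,N+1−p)} C(p−1,c)·C(N−p,c−1)·((p−1)x₊ − (N+1−p)x₋)·x₊^c (1−x₊)^{p−1−c} x₋^c (1−x₋)^{N+1−p−c} + N·x₊·(1−x₊)^N. In particular the left-hand side, nominally a sum of 2^{N−1} terms, is computed by O(N²) terms. -/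
open scoped BigOperators

/-- Step weight of the two-level model: `q(true,true) = 1−x₊`, `q(true,false) = x₊`,
`q(false,true) = x₋`, `q(false,false) = 1−x₋`. -/
noncomputable def qubitStep (xp xm : ℝ) : Bool → Bool → ℝ
  | true, true => 1 - xp
  | true, false => xp
  | false, true => xm
  | false, false => 1 - xm

/-!
A closed trajectory with `p` excited sites and `c` descents `+ → −` also makes `c` ascents
`− → +`, hence `p - 1 - c` steps `+ → +` and `N + 1 - p - c` steps `− → −`; so its reward and
its transition probability depend on `(p, c)` only, and the sum collapses to a sum over `(p, c)`
weighted by the number of such trajectories. For `c ≥ 1` the excited sites form `c + 1` blocks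
and the ground sites `c` blocks, which gives `C(p - 1, c) * C(N - p, c - 1)`; this count is
established by appending one site at a time (Pascal's rule), together with the count of the
trajectories ending in `−`. The only closed trajectory with `c = 0` is the constant one.
-/

open Finset

def trueCount {ι : Type*} [Fintype ι] (ψ : ι → Bool) : ℕ := #{i | ψ i = true}

def transitionCount {n : ℕ} (ψ : Fin (n + 1) → Bool) (a b : Bool) : ℕ :=
  #{i : Fin n | ψ i.castSucc = a ∧ ψ i.succ = b}

def descentCount {n : ℕ} (ψ : Fin (n + 1) → Bool) : ℕ := transitionCount ψ true false

section Transitions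

variable {n : ℕ} (ψ : Fin (n + 1) → Bool)

theorem prod_eq_prod_pow_transitionCount {M : Type*} [CommMonoid M] (f : Bool → Bool → M) :
    ∏ i : Fin n, f (ψ i.castSucc) (ψ i.succ) = ∏ a, ∏ b, f a b ^ transitionCount ψ a b := by
  rw [← Fintype.prod_prod_type', ← prod_fiberwise' univ (fun i : Fin n => (ψ i.castSucc, ψ i.succ))
    (fun x => f x.1 x.2)]
  simp [transitionCount, Prod.ext_iff]

theorem transitionCount_true_add_false_eq_card_castSucc (a : Bool) :
    transitionCount ψ a true + transitionCount ψ a false = #{i : Fin n | ψ i.castSucc = a} := by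
  rw [← card_filter_add_card_filter_not (fun i => ψ i.succ = true)]
  simp only [filter_filter, Bool.not_eq_true, transitionCount]

theorem transitionCount_true_add_false_eq_card_succ (b : Bool) :
    transitionCount ψ true b + transitionCount ψ false b = #{i : Fin n | ψ i.succ = b} := by
  rw [← card_filter_add_card_filter_not (fun i => ψ i.castSucc = true)]
  simp only [filter_filter, Bool.not_eq_true, transitionCount, and_comm]

theorem trueCount_eq_card_castSucc_add :
    trueCount ψ = #{i : Fin n | ψ i.castSucc = true} + (ψ (Fin.last n)).toNat := by
  simp only [trueCount, card_filter, Fin.sum_univ_castSucc]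
  cases ψ (Fin.last n) <;> rfl

theorem trueCount_eq_card_succ_add :
    trueCount ψ = #{i : Fin n | ψ i.succ = true} + (ψ 0).toNat := by
  simp only [trueCount, card_filter, Fin.sum_univ_succ]
  cases ψ 0 <;> simp [add_comm]

theorem card_castSucc_true_add_card_castSucc_false :
    #{i : Fin n | ψ i.castSucc = true} + #{i : Fin n | ψ i.castSucc = false} = n := by
  simpa using card_filter_add_card_filter_not (s := univ) (fun i : Fin n => ψ i.castSucc = true)

theorem prod_qubitStep_of_closed (xp xm : ℝ)
    (h0 : ψ 0 = true) (hlast : ψ (Fin.last n) = true) :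
    ∏ i : Fin n, qubitStep xp xm (ψ i.castSucc) (ψ i.succ)
      = xp ^ descentCount ψ * (1 - xp) ^ (trueCount ψ - 1 - descentCount ψ)
        * xm ^ descentCount ψ * (1 - xm) ^ (n + 1 - trueCount ψ - descentCount ψ) := by
  have hout_true := transitionCount_true_add_false_eq_card_castSucc ψ true
  have hout_false := transitionCount_true_add_false_eq_card_castSucc ψ false
  have hin_true := transitionCount_true_add_false_eq_card_succ ψ true
  have htotal := card_castSucc_true_add_card_castSucc_false ψ
  have hsource := trueCount_eq_card_castSucc_add ψ
  have htarget := trueCount_eq_card_succ_add ψ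
  rw [hlast, Bool.toNat_true] at hsource
  rw [h0, Bool.toNat_true] at htarget
  -- a closed chain enters the excited state exactly as often as it leaves it
  have hascents : transitionCount ψ false true = descentCount ψ := by unfold descentCount; omega
  have hstays_true : transitionCount ψ true true = trueCount ψ - 1 - descentCount ψ := by
    unfold descentCount; omega
  have hstays_false : transitionCount ψ false false = n + 1 - trueCount ψ - descentCount ψ := by
    unfold descentCount; omega
  rw [prod_eq_prod_pow_transitionCount, Fintype.prod_bool, Fintype.prod_bool, Fintype.prod_bool,
    hascents, hstays_true, hstays_false]
  simp only [qubitStep, descentCount]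
  ring

end Transitions

theorem trueCount_snoc {n : ℕ} (φ : Fin (n + 1) → Bool) (b : Bool) :
    trueCount (Fin.snoc φ b : Fin (n + 2) → Bool) = trueCount φ + b.toNat := by
  rw [trueCount_eq_card_castSucc_add]
  simp only [Fin.snoc_castSucc, Fin.snoc_last]
  rfl

theorem descentCount_snoc {n : ℕ} (φ : Fin (n + 1) → Bool) (b : Bool) :
    descentCount (Fin.snoc φ b : Fin (n + 2) → Bool)
      = descentCount φ + (φ (Fin.last n) && !b).toNat := by
  simp only [descentCount, transitionCount, card_filter, Fin.sum_univ_castSucc, Fin.succ_castSucc,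
    Fin.succ_last, Fin.snoc_castSucc, Fin.snoc_last]
  cases φ (Fin.last n) <;> cases b <;> simp

theorem card_filter_snoc {n : ℕ} (P : (Fin (n + 2) → Bool) → Prop) [DecidablePred P] :
    #{ψ | P ψ} = ∑ b, #{φ : Fin (n + 1) → Bool | P (Fin.snoc φ b)} := by
  simp only [card_filter]
  rw [← (Fin.snocEquiv fun _ => Bool).sum_comp, Fintype.sum_prod_type]
  rfl

def chainCount (n : ℕ) (b : Bool) (p c : ℕ) : ℕ :=
  #{ψ : Fin (n + 1) → Bool | ψ 0 = true ∧ ψ (Fin.last n) = b ∧ trueCount ψ = p ∧ descentCount ψ = c}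

theorem chainCount_succ (n : ℕ) (b : Bool) (p c : ℕ) :
    chainCount (n + 1) b p c = ∑ a, #{φ : Fin (n + 1) → Bool | φ 0 = true ∧ φ (Fin.last n) = a ∧
      trueCount φ + b.toNat = p ∧ descentCount φ + (a && !b).toNat = c} := by
  have hsnoc_zero (φ : Fin (n + 1) → Bool) (b' : Bool) :
      (Fin.snoc φ b' : Fin (n + 2) → Bool) 0 = φ 0 :=
    Fin.snoc_castSucc (i := 0) ..
  rw [chainCount, card_filter_snoc]
  simp only [hsnoc_zero, Fin.snoc_last, trueCount_snoc, descentCount_snoc]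
  rw [Fintype.sum_eq_single b fun b' hb' => by simp [hb'],
    card_eq_sum_card_fiberwise (f := fun φ => φ (Fin.last n)) (t := univ) fun _ _ => mem_univ _]
  refine sum_congr rfl fun a _ => ?_
  rw [filter_filter]
  congr 1
  apply filter_congr
  intro φ _
  constructor
  · rintro ⟨⟨h0, -, hp, hc⟩, rfl⟩
    exact ⟨h0, rfl, hp, hc⟩
  · rintro ⟨h0, rfl, hp, hc⟩
    exact ⟨⟨h0, rfl, hp, hc⟩, rfl⟩

-- With `c` descents: `c + 1` excited and `c` ground blocks if the chain ends in `+`, `c` of each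
-- if it ends in `−`; `m` sites form `k` nonempty consecutive blocks in `C(m - 1, k - 1)` ways.
def chainCountFormula (n : ℕ) : Bool → ℕ → ℕ → ℕ
  | true, p, 0 => if p = n + 1 then 1 else 0
  | true, p, c + 1 => if p ≤ n then (p - 1).choose (c + 1) * (n - p).choose c else 0
  | false, _, 0 => 0
  | false, p, c + 1 => if 0 < p ∧ p ≤ n then (p - 1).choose c * (n - p).choose c else 0

theorem chainCountFormula_zero (b : Bool) (p c : ℕ) :
    chainCountFormula 0 b p c = if b = true ∧ p = 1 ∧ c = 0 then 1 else 0 := by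
  rcases b with _ | _ <;> rcases p with _ | p <;> rcases c with _ | c <;> simp [chainCountFormula]

theorem chainCountFormula_succ_true_zero (n c : ℕ) : chainCountFormula (n + 1) true 0 c = 0 := by
  rcases c with _ | c <;> simp [chainCountFormula]

theorem chainCountFormula_succ_true_succ (n p c : ℕ) :
    chainCountFormula (n + 1) true (p + 1) c
      = chainCountFormula n true p c + chainCountFormula n false p c := by
  rcases c with _ | c
  · simp [chainCountFormula]
  rcases p with _ | p
  · simp [chainCountFormula]
  · simp only [chainCountFormula, Nat.add_sub_cancel, Nat.choose_succ_succ', Nat.reduceSubDiff]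
    split_ifs <;> first | omega | ring

theorem chainCountFormula_succ_false_succ (n p c : ℕ) :
    chainCountFormula (n + 1) false p (c + 1)
      = chainCountFormula n false p (c + 1) + chainCountFormula n true p c := by
  rcases c with _ | c
  · simp only [chainCountFormula, Nat.choose_zero_right, mul_one]
    split_ifs <;> omega
  rcases p with _ | p
  · simp [chainCountFormula]
  by_cases hp : p + 1 ≤ n
  · simp only [chainCountFormula, Nat.sub_add_comm hp, Nat.choose_succ_succ']
    split_ifs <;> first | omega | ring
  · simp [chainCountFormula, hp, show n + 1 - (p + 1) = 0 by omega]

theorem chainCount_zero (b : Bool) (p c : ℕ) :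
    chainCount 0 b p c = if b = true ∧ p = 1 ∧ c = 0 then 1 else 0 := by
  rw [chainCount, card_filter, ← (Equiv.funUnique (Fin 1) Bool).symm.sum_comp, Fintype.sum_bool]
  simp [trueCount, descentCount, transitionCount, eq_comm]

theorem chainCount_eq_chainCountFormula (n : ℕ) (b : Bool) (p c : ℕ) :
    chainCount n b p c = chainCountFormula n b p c := by
  induction n generalizing b p c with
  | zero => rw [chainCount_zero, chainCountFormula_zero]
  | succ n ih =>
    rw [chainCount_succ]
    rcases b with _ | _
    · rcases c with _ | c
      · simp [← chainCount.eq_1, ih, chainCountFormula]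
      · simp [← chainCount.eq_1, ih, chainCountFormula_succ_false_succ, add_comm]
    · rcases p with _ | p
      · simp [chainCountFormula_succ_true_zero]
      · simp [← chainCount.eq_1, ih, chainCountFormula_succ_true_succ]

theorem sum_closed_eq_sum_chainCount_smul {M : Type*} [AddCommMonoid M] (n : ℕ)
    (F : ℕ → ℕ → M) :
    ∑ ψ ∈ {ψ : Fin (n + 1) → Bool | ψ 0 = true ∧ ψ (Fin.last n) = true},
        F (trueCount ψ) (descentCount ψ)
      = ∑ p ∈ range (n + 2), ∑ c ∈ range (n + 1), chainCount n true p c • F p c := by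
  have hmaps (ψ : Fin (n + 1) → Bool) :
      (trueCount ψ, descentCount ψ) ∈ range (n + 2) ×ˢ range (n + 1) := by
    have htrue : trueCount ψ ≤ n + 1 := (card_le_univ _).trans_eq (Fintype.card_fin _)
    have hdescent : descentCount ψ ≤ n := by
      unfold descentCount transitionCount
      exact (card_le_univ _).trans_eq (Fintype.card_fin n)
    simp only [mem_product, mem_range]
    omega
  rw [← sum_product', ← sum_fiberwise_of_maps_to' (fun ψ _ => hmaps ψ) fun pc => F pc.1 pc.2]
  refine sum_congr rfl fun ⟨p, c⟩ _ => ?_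
  rw [sum_const, filter_filter, chainCount]
  congr 2
  ext ψ
  simp [and_assoc]

theorem chainCountFormula_true_of_pos (n p : ℕ) {c : ℕ} (hc : 0 < c) :
    chainCountFormula n true p c
      = if p ≤ n then (p - 1).choose c * (n - p).choose (c - 1) else 0 := by
  obtain ⟨c, rfl⟩ := Nat.exists_eq_add_one_of_ne_zero hc.ne'
  rfl

theorem chainCountFormula_true_eq_zero (n : ℕ) {p c : ℕ} (hc : 0 < c)
    (h : ¬(2 ≤ p ∧ p ≤ n ∧ c ≤ min (p - 1) (n + 1 - p))) : chainCountFormula n true p c = 0 := by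
  rw [chainCountFormula_true_of_pos n p hc]
  split_ifs with hp
  · obtain h' | h' : p - 1 < c ∨ n - p < c - 1 := by omega
    · simp [Nat.choose_eq_zero_of_lt h']
    · simp [Nat.choose_eq_zero_of_lt h']
  · rfl

theorem sum_chainCountFormula_true_smul {M : Type*} [AddCommMonoid M] (n : ℕ)
    (F : ℕ → ℕ → M) :
    ∑ p ∈ range (n + 2), ∑ c ∈ range (n + 1), chainCountFormula n true p c • F p c
      = ∑ p ∈ Icc 2 n, ∑ c ∈ Icc 1 (min (p - 1) (n + 1 - p)),
          ((p - 1).choose c * (n - p).choose (c - 1)) • F p c + F (n + 1) 0 := by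
  have hsplit (p : ℕ) : ∑ c ∈ range (n + 1), chainCountFormula n true p c • F p c
      = ∑ c ∈ Ico 1 (n + 1), chainCountFormula n true p c • F p c
        + if p = n + 1 then F p 0 else 0 := by
    rw [range_eq_Ico, sum_eq_sum_Ico_succ_bot (Nat.succ_pos n), add_comm]
    simp [chainCountFormula, ite_smul]
  have hzero {p c : ℕ} (hc : c ∈ Ico 1 (n + 1))
      (h : ¬(2 ≤ p ∧ p ≤ n ∧ c ≤ min (p - 1) (n + 1 - p))) :
      chainCountFormula n true p c • F p c = 0 := by
    rw [chainCountFormula_true_eq_zero n (mem_Ico.1 hc).1 h, zero_smul]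
  simp_rw [hsplit]
  rw [sum_add_distrib, sum_ite_eq' _ _ fun p => F p 0, if_pos (self_mem_range_succ _)]
  congr 1
  rw [← sum_subset (s₁ := Icc 2 n) (fun p hp => by simp only [mem_Icc, mem_range] at hp ⊢; omega)
    fun p _ hp => sum_eq_zero fun c hc => hzero hc (by simp only [mem_Icc] at hp; omega)]
  refine sum_congr rfl fun p hp => ?_
  rw [mem_Icc] at hp
  rw [← sum_subset (s₁ := Icc 1 (min (p - 1) (n + 1 - p)))
    (fun c hc => by simp only [mem_Icc, mem_Ico] at hc ⊢; omega)
    fun c hc hc' => hzero hc (by simp only [mem_Icc, mem_Ico] at hc hc'; omega)]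
  refine sum_congr rfl fun c hc => ?_
  rw [chainCountFormula_true_of_pos n p (mem_Icc.1 hc).1, if_pos hp.2]

theorem closed_chain_expected_return_general (N : ℕ) (xp xm : ℝ) :
    ∑ ψ ∈ Finset.univ.filter (fun ψ : Fin (N + 1) → Bool =>
        ψ 0 = true ∧ ψ (Fin.last N) = true),
      ((((Finset.univ.filter (fun i : Fin (N + 1) => ψ i = true)).card : ℝ) - 1) * xp
          - ((N : ℝ) + 1
              - ((Finset.univ.filter (fun i : Fin (N + 1) => ψ i = true)).card : ℝ)) * xm)
        * ∏ i : Fin N, qubitStep xp xm (ψ i.castSucc) (ψ i.succ)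
    = (∑ p ∈ Finset.Icc 2 N, ∑ c ∈ Finset.Icc 1 (min (p - 1) (N + 1 - p)),
          ((Nat.choose (p - 1) c * Nat.choose (N - p) (c - 1) : ℕ) : ℝ)
            * (((p : ℝ) - 1) * xp - ((N : ℝ) + 1 - (p : ℝ)) * xm)
            * xp ^ c * (1 - xp) ^ (p - 1 - c) * xm ^ c * (1 - xm) ^ (N + 1 - p - c))
      + (N : ℝ) * xp * (1 - xp) ^ N := by
  let F (p c : ℕ) : ℝ := (((p : ℝ) - 1) * xp - ((N : ℝ) + 1 - p) * xm)
    * (xp ^ c * (1 - xp) ^ (p - 1 - c) * xm ^ c * (1 - xm) ^ (N + 1 - p - c))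
  trans ∑ ψ ∈ {ψ : Fin (N + 1) → Bool | ψ 0 = true ∧ ψ (Fin.last N) = true},
    F (trueCount ψ) (descentCount ψ)
  · refine sum_congr rfl fun ψ hψ => ?_
    obtain ⟨h0, hlast⟩ := (mem_filter.1 hψ).2
    rw [prod_qubitStep_of_closed ψ xp xm h0 hlast]
    rfl
  simp_rw [sum_closed_eq_sum_chainCount_smul, chainCount_eq_chainCountFormula,
    sum_chainCountFormula_true_smul, nsmul_eq_mul]
  congr 1
  · refine sum_congr rfl fun p _ => sum_congr rfl fun c _ => ?_
    simp only [F]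
    ring
  · simp [F]

/-- Closed-form expected return for the closed-chain qubit model: the brute-force sum over
all `2^{N−1}` binary trajectories with both endpoints `true` equals the `O(N²)`-term
combinatorial double sum plus the boundary term `N·x₊·(1−x₊)^N`. -/
theorem closed_chain_expected_return (N : ℕ) (hN : 1 ≤ N) (xp xm : ℝ) :
    ∑ ψ ∈ Finset.univ.filter (fun ψ : Fin (N + 1) → Bool =>
        ψ 0 = true ∧ ψ (Fin.last N) = true),
      ((((Finset.univ.filter (fun i : Fin (N + 1) => ψ i = true)).card : ℝ) - 1) * xp
          - ((N : ℝ) + 1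
              - ((Finset.univ.filter (fun i : Fin (N + 1) => ψ i = true)).card : ℝ)) * xm)
        * ∏ i : Fin N, qubitStep xp xm (ψ i.castSucc) (ψ i.succ)
    = (∑ p ∈ Finset.Icc 2 N, ∑ c ∈ Finset.Icc 1 (min (p - 1) (N + 1 - p)),
          ((Nat.choose (p - 1) c * Nat.choose (N - p) (c - 1) : ℕ) : ℝ)
            * (((p : ℝ) - 1) * xp - ((N : ℝ) + 1 - (p : ℝ)) * xm)
            * xp ^ c * (1 - xp) ^ (p - 1 - c) * xm ^ c * (1 - xm) ^ (N + 1 - p - c))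
      + (N : ℝ) * xp * (1 - xp) ^ N :=
  closed_chain_expected_return_general N xp xm
end

section
/- Qutrit transition-count determination: let N ≥ 2 and let ψ : Fin (N+1) → Fin 3 be a trajectory with ψ(0) = 0 and ψ(N) = 2. For i, j ∈ Fin 3, let a_{ij} = #{k < N : ψ(k) = i and ψ(k+1) = j}, and let n_j = #{k ≤ N : ψ(k) = j}. Assume the forbidden-transition conditions a_{02} = a_{10} = a_{21} = 0. Then, with c := a_{20}, all remaining counts are determined: a_{00} = n_0 − 1 − c, a_{01} = 1 + c, a_{11} = n_1 − 1 − c, a_{12} = 1 + c, and a_{22} = n_2 − 1 − c. -/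
/-!
Every visit to a state is either followed by a step out of it or is the final position, and is
either preceded by a step into it or is the initial position. For each state this gives an
out-flow and an in-flow balance between transition and visit counts. With the three forbidden
transitions removed, these six linear equations leave only the feedback count `a 2 0` free.
-/

open Finset

namespace Trajectory

variable {α : Type*} [DecidableEq α] {N : ℕ} (ψ : Fin (N + 1) → α)

def transitionCount (i j : α) : ℕ :=
  #{k : Fin N | ψ k.castSucc = i ∧ ψ k.succ = j}

def visitCount (j : α) : ℕ :=
  #{k : Fin (N + 1) | ψ k = j}

theorem sum_card_filter_and_eq_card_filter {β : Type*} [Fintype α] [Fintype β] (p : β → Prop)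
    [DecidablePred p] (f : β → α) :
    ∑ j, #{k | p k ∧ f k = j} = #{k | p k} := by
  rw [card_eq_sum_card_fiberwise (f := f) (t := univ) (fun _ _ ↦ mem_coe.2 (mem_univ _))]
  simp only [filter_filter]

theorem sum_transitionCount_right [Fintype α] (i : α) :
    ∑ j, transitionCount ψ i j = #{k : Fin N | ψ k.castSucc = i} :=
  sum_card_filter_and_eq_card_filter _ _

theorem sum_transitionCount_left [Fintype α] (j : α) :
    ∑ i, transitionCount ψ i j = #{k : Fin N | ψ k.succ = j} := by
  rw [← sum_card_filter_and_eq_card_filter (fun k : Fin N ↦ ψ k.succ = j) (ψ ∘ Fin.castSucc)]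
  exact sum_congr rfl fun i _ ↦ congrArg card (filter_congr fun _ _ ↦ and_comm)

theorem visitCount_eq_card_castSucc_add (i : α) :
    visitCount ψ i = #{k : Fin N | ψ k.castSucc = i} + if ψ (Fin.last N) = i then 1 else 0 := by
  simp only [visitCount, card_filter, Fin.sum_univ_castSucc]

theorem visitCount_eq_add_card_succ (j : α) :
    visitCount ψ j = (if ψ 0 = j then 1 else 0) + #{k : Fin N | ψ k.succ = j} := by
  simp only [visitCount, card_filter, Fin.sum_univ_succ]

theorem sum_transitionCount_right_add_last [Fintype α] (i : α) :
    ∑ j, transitionCount ψ i j + (if ψ (Fin.last N) = i then 1 else 0) = visitCount ψ i := by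
  rw [sum_transitionCount_right, visitCount_eq_card_castSucc_add]

theorem first_add_sum_transitionCount_left [Fintype α] (j : α) :
    (if ψ 0 = j then 1 else 0) + ∑ i, transitionCount ψ i j = visitCount ψ j := by
  rw [sum_transitionCount_left, visitCount_eq_add_card_succ]

end Trajectory

open Trajectory in
theorem qutrit_transition_count_determination_general (N : ℕ)
    (ψ : Fin (N + 1) → Fin 3) (h0 : ψ 0 = 0) (hlast : ψ (Fin.last N) = 2)
    (a : Fin 3 → Fin 3 → ℕ) (n : Fin 3 → ℕ)
    (ha : ∀ i j, a i j = (Finset.univ.filter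
        (fun k : Fin N => ψ k.castSucc = i ∧ ψ k.succ = j)).card)
    (hn : ∀ j, n j = (Finset.univ.filter (fun k : Fin (N + 1) => ψ k = j)).card)
    (h02 : a 0 2 = 0) (h10 : a 1 0 = 0) (h21 : a 2 1 = 0) :
    a 0 0 = n 0 - 1 - a 2 0 ∧ a 0 1 = 1 + a 2 0 ∧
      a 1 1 = n 1 - 1 - a 2 0 ∧ a 1 2 = 1 + a 2 0 ∧
      a 2 2 = n 2 - 1 - a 2 0 := by
  obtain rfl : a = transitionCount ψ := funext₂ ha
  obtain rfl : n = visitCount ψ := funext hn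
  have out (i : Fin 3) := sum_transitionCount_right_add_last ψ i
  have inn (j : Fin 3) := first_add_sum_transitionCount_left ψ j
  have := out 0; have := out 1; have := out 2
  have := inn 0; have := inn 1; have := inn 2
  simp only [Fin.sum_univ_three, h0, hlast, Fin.reduceEq, if_true, if_false] at *
  omega

/-- Qutrit transition-count determination: for a trajectory from `|0⟩` to `|2⟩` with the
forbidden transitions `0→2`, `1→0`, `2→1` absent, all transition counts are determined by
the occupation numbers `n j` and the feedback count `c = a 2 0`. -/
theorem qutrit_transition_count_determination (N : ℕ) (hN : 2 ≤ N)
    (ψ : Fin (N + 1) → Fin 3) (h0 : ψ 0 = 0) (hlast : ψ (Fin.last N) = 2)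
    (a : Fin 3 → Fin 3 → ℕ) (n : Fin 3 → ℕ)
    (ha : ∀ i j, a i j = (Finset.univ.filter
        (fun k : Fin N => ψ k.castSucc = i ∧ ψ k.succ = j)).card)
    (hn : ∀ j, n j = (Finset.univ.filter (fun k : Fin (N + 1) => ψ k = j)).card)
    (h02 : a 0 2 = 0) (h10 : a 1 0 = 0) (h21 : a 2 1 = 0) :
    a 0 0 = n 0 - 1 - a 2 0 ∧ a 0 1 = 1 + a 2 0 ∧
      a 1 1 = n 1 - 1 - a 2 0 ∧ a 1 2 = 1 + a 2 0 ∧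
      a 2 2 = n 2 - 1 - a 2 0 :=
  qutrit_transition_count_determination_general N ψ h0 hlast a n ha hn h02 h10 h21
end

section
/- Qutrit trajectory multiplicity: let N ≥ 2, let n_0, n_1, n_2 ≥ 1 with n_0 + n_1 + n_2 = N + 1, and let c be a natural number with c ≤ min(n_0, n_1, n_2) − 1. The number of trajectories ψ : Fin (N+1) → Fin 3 with ψ(0) = 0, ψ(N) = 2, occupation counts #{k ≤ N : ψ(k) = j} = n_j for j = 0, 1, 2, no steps of the forms 0→2, 1→0, 2→1, and exactly c steps of the form 2→0, equals the product of binomial coefficients C(n_0 − 1, c) · C(n_1 − 1, c) · C(n_2 − 1, c). -/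
/-!
Generalize the starting state to `s` and peel off the first state: a valid trajectory either
stays at `s` or advances to `s + 1` (mod 3), the advance `2 → 0` using up one feedback.
Counting the ways to split each occupation `n_j` into runs, the number of trajectories is
`∏ⱼ K(n_j, c + [s ≤ j])` with `K(n, k)` the number of compositions of `n` into `k` positive parts,
and Pascal's rule `K(n + 1, k + 1) = K(n, k + 1) + K(n, k)` at `j = s` matches the two ways to
continue. For `s = 0` every state has `c + 1` runs, and `K(n, c + 1) = C(n - 1, c)`.
-/

open Finset

theorem Fin.forall_cons_castSucc_succ {α : Type*} {N : ℕ} (r : α → α → Prop) (a : α)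
    (φ : Fin (N + 1) → α) :
    (∀ k : Fin (N + 1),
        r ((Fin.cons a φ : Fin (N + 2) → α) k.castSucc) ((Fin.cons a φ : Fin (N + 2) → α) k.succ)) ↔
      r a (φ 0) ∧ ∀ k : Fin N, r (φ k.castSucc) (φ k.succ) := by
  simp [Fin.forall_fin_succ]

theorem Fin.card_filter_cons_castSucc_succ {α : Type*} {N : ℕ} (r : α → α → Prop)
    [DecidableRel r] (a : α) (φ : Fin (N + 1) → α) :
    #{k : Fin (N + 1) |
        r ((Fin.cons a φ : Fin (N + 2) → α) k.castSucc) ((Fin.cons a φ : Fin (N + 2) → α) k.succ)} =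
      (if r a (φ 0) then 1 else 0) + #{k : Fin N | r (φ k.castSucc) (φ k.succ)} := by
  simp [Fin.card_filter_univ_succ']

theorem Pi.exists_eq_add_single {ι : Type*} [DecidableEq ι] {f : ι → ℕ} {i : ι}
    (h : f i ≠ 0) : ∃ g : ι → ℕ, f = g + Pi.single i 1 := by
  refine ⟨f - Pi.single i 1, funext fun j => ?_⟩
  rcases eq_or_ne j i with rfl | hj
  · simp only [Pi.add_apply, Pi.sub_apply, Pi.single_eq_same]
    omega
  · simp [hj]

/-- The number of compositions of `n` into `k` positive parts. -/
def compositionCount : ℕ → ℕ → ℕ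
  | 0, 0 => 1
  | 0, _ + 1 => 0
  | _ + 1, 0 => 0
  | n + 1, k + 1 => compositionCount n k + compositionCount n (k + 1)

theorem compositionCount_zero_right (n : ℕ) :
    compositionCount n 0 = if n = 0 then 1 else 0 := by
  cases n <;> rfl

theorem compositionCount_succ_succ (n k : ℕ) :
    compositionCount (n + 1) (k + 1) = n.choose k := by
  induction n generalizing k with
  | zero => cases k <;> simp [compositionCount]
  | succ n ih =>
    cases k with
    | zero => rw [compositionCount, ih]; simp [compositionCount]
    | succ k => rw [compositionCount, ih, ih, Nat.choose_succ_succ']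

theorem compositionCount_eq_choose {n : ℕ} (hn : n ≠ 0) (k : ℕ) :
    compositionCount n (k + 1) = (n - 1).choose k := by
  obtain ⟨n, rfl⟩ := Nat.exists_eq_succ_of_ne_zero hn
  exact compositionCount_succ_succ n k

namespace Qutrit

/-- Stay, or advance; in `Fin 3` the feedback step `2 → 0` is the advance `2 + 1 = 0`. -/
def LadderStep (a b : Fin 3) : Prop := b = a ∨ b = a + 1

instance : DecidableRel LadderStep := fun _ _ => inferInstanceAs (Decidable (_ ∨ _))

theorem ladderStep_iff {a b : Fin 3} :
    LadderStep a b ↔ ¬(a = 0 ∧ b = 2) ∧ ¬(a = 1 ∧ b = 0) ∧ ¬(a = 2 ∧ b = 1) := by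
  revert a b
  decide

variable {m N : ℕ}

def occupation (ψ : Fin m → Fin 3) (j : Fin 3) : ℕ := #{k | ψ k = j}

def feedbackCount (ψ : Fin (N + 1) → Fin 3) : ℕ :=
  #{k : Fin N | ψ k.castSucc = 2 ∧ ψ k.succ = 0}

theorem occupation_cons (s : Fin 3) (φ : Fin m → Fin 3) :
    occupation (Fin.cons s φ : Fin (m + 1) → Fin 3) = occupation φ + Pi.single s 1 := by
  ext j
  simp [occupation, Fin.card_filter_univ_succ', Pi.single_apply, eq_comm, add_comm]

theorem feedbackCount_cons (s : Fin 3) (φ : Fin (N + 1) → Fin 3) :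
    feedbackCount (Fin.cons s φ : Fin (N + 2) → Fin 3) =
      (if s = 2 ∧ φ 0 = 0 then 1 else 0) + feedbackCount φ :=
  Fin.card_filter_cons_castSucc_succ (fun a b => a = 2 ∧ b = 0) s φ

def paths (N : ℕ) (s : Fin 3) (n : Fin 3 → ℕ) : Finset (Fin (N + 1) → Fin 3) :=
  {ψ | ψ 0 = s ∧ ψ (Fin.last N) = 2 ∧ occupation ψ = n ∧
    ∀ k : Fin N, LadderStep (ψ k.castSucc) (ψ k.succ)}

def trajectories (N : ℕ) (s : Fin 3) (n : Fin 3 → ℕ) (c : ℕ) : Finset (Fin (N + 1) → Fin 3) :=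
  {ψ ∈ paths N s n | feedbackCount ψ = c}

theorem apply_zero_of_mem_paths {s : Fin 3} {n : Fin 3 → ℕ} {ψ : Fin (N + 1) → Fin 3}
    (h : ψ ∈ paths N s n) : ψ 0 = s :=
  (mem_filter.1 h).2.1

theorem cons_mem_paths {s : Fin 3} {n : Fin 3 → ℕ} {φ : Fin (N + 1) → Fin 3} :
    (Fin.cons s φ : Fin (N + 2) → Fin 3) ∈ paths (N + 1) s (n + Pi.single s 1) ↔
      LadderStep s (φ 0) ∧ φ ∈ paths N (φ 0) n := by
  simp only [paths, mem_filter, mem_univ, true_and, Fin.forall_cons_castSucc_succ]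
  simp only [Fin.cons_zero, Fin.cons_last, occupation_cons, add_left_inj]
  tauto

theorem card_filter_paths_succ (s : Fin 3) (n : Fin 3 → ℕ)
    (P : (Fin (N + 2) → Fin 3) → Prop) [DecidablePred P] :
    #{ψ ∈ paths (N + 1) s (n + Pi.single s 1) | P ψ} =
      #{φ ∈ paths N s n | P (Fin.cons s φ)} + #{φ ∈ paths N (s + 1) n | P (Fin.cons s φ)} := by
  have hcons : #{ψ ∈ paths (N + 1) s (n + Pi.single s 1) | P ψ} =
      #{φ | (Fin.cons s φ : Fin (N + 2) → Fin 3) ∈ paths (N + 1) s (n + Pi.single s 1) ∧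
        P (Fin.cons s φ)} := by
    have hψ : ∀ ψ ∈ paths (N + 1) s (n + Pi.single s 1), Fin.cons s (Fin.tail ψ) = ψ :=
      fun ψ h => by rw [← apply_zero_of_mem_paths h, Fin.cons_self_tail]
    refine card_nbij' Fin.tail (fun φ => Fin.cons s φ) ?_ ?_ ?_ fun φ _ => Fin.tail_cons _ _
    · intro ψ h
      simp only [coe_filter, Set.mem_ofPred_eq, mem_univ, true_and] at h ⊢
      rwa [hψ ψ h.1]
    · intro φ h
      simpa using h
    · intro ψ h
      exact hψ ψ (mem_filter.1 h).1
  rw [hcons, ← card_union_of_disjoint]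
  · congr 1
    ext φ
    simp only [mem_filter, mem_univ, true_and, mem_union, cons_mem_paths, LadderStep]
    constructor
    · rintro ⟨⟨h | h, hφ⟩, hP⟩ <;> rw [h] at hφ
      exacts [Or.inl ⟨hφ, hP⟩, Or.inr ⟨hφ, hP⟩]
    · rintro (⟨hφ, hP⟩ | ⟨hφ, hP⟩) <;> rw [apply_zero_of_mem_paths hφ] <;> simp [*]
  · refine disjoint_left.2 fun φ h₁ h₂ => ?_
    have h := (apply_zero_of_mem_paths (mem_filter.1 h₁).1).symm.trans
      (apply_zero_of_mem_paths (mem_filter.1 h₂).1)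
    simp at h

theorem card_trajectories_succ (s : Fin 3) (n : Fin 3 → ℕ) (c : ℕ) :
    #(trajectories (N + 1) s (n + Pi.single s 1) (c + if s = 2 then 1 else 0)) =
      #(trajectories N s n (c + if s = 2 then 1 else 0)) + #(trajectories N (s + 1) n c) := by
  rw [trajectories, card_filter_paths_succ]
  congr 1 <;> refine congrArg card (filter_congr fun φ hφ => ?_) <;>
    rw [feedbackCount_cons, apply_zero_of_mem_paths hφ]
  · fin_cases s <;> simp
  · fin_cases s <;> simp
    omega

theorem card_trajectories_succ_two_zero (n : Fin 3 → ℕ) :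
    #(trajectories (N + 1) 2 (n + Pi.single 2 1) 0) = #(trajectories N 2 n 0) := by
  rw [trajectories, card_filter_paths_succ, ← add_zero #(trajectories N 2 n 0)]
  congr 1
  · refine congrArg card (filter_congr fun φ hφ => ?_)
    simp [feedbackCount_cons, apply_zero_of_mem_paths hφ]
  · refine card_eq_zero.2 (filter_eq_empty_iff.2 fun φ hφ => ?_)
    simp [feedbackCount_cons, apply_zero_of_mem_paths hφ]

theorem card_trajectories_zero (s : Fin 3) (c : ℕ) :
    #(trajectories 0 s (Pi.single s 1) c) = if s = 2 ∧ c = 0 then 1 else 0 := by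
  rcases c with _ | c
  · fin_cases s <;> decide
  · simp [trajectories, feedbackCount]

theorem card_trajectories_eq_zero_of_apply_eq_zero {s : Fin 3} {n : Fin 3 → ℕ} (hs : n s = 0)
    (c : ℕ) : #(trajectories N s n c) = 0 := by
  refine card_eq_zero.2 (filter_eq_empty_iff.2 fun ψ hψ _ => ?_)
  obtain ⟨h0, -, hocc, -⟩ := (mem_filter.1 hψ).2
  have hpos : 0 < occupation ψ (ψ 0) := card_pos.2 ⟨0, by simp⟩
  rw [h0, hocc, hs] at hpos
  exact hpos.false

/-- A trajectory from `s` with `c` feedbacks has `c + [s ≤ j]` runs of state `j`. -/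
def runCompositionCount (s : Fin 3) (n : Fin 3 → ℕ) (c : ℕ) : ℕ :=
  ∏ j, compositionCount (n j) (c + if s ≤ j then 1 else 0)

theorem runCompositionCount_succ (s : Fin 3) (n : Fin 3 → ℕ) (c : ℕ) :
    runCompositionCount s (n + Pi.single s 1) (c + if s = 2 then 1 else 0) =
      runCompositionCount s n (c + if s = 2 then 1 else 0) + runCompositionCount (s + 1) n c := by
  fin_cases s <;> simp [runCompositionCount, Fin.prod_univ_three, compositionCount] <;> ring

theorem runCompositionCount_two_zero {n : Fin 3 → ℕ} (hn : ∑ j, n j ≠ 0) :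
    runCompositionCount 2 (n + Pi.single 2 1) 0 = runCompositionCount 2 n 0 := by
  simp [runCompositionCount, Fin.prod_univ_three, compositionCount, Fin.sum_univ_three] at hn ⊢
  simp only [compositionCount_zero_right]
  split_ifs <;> simp_all

theorem runCompositionCount_eq_zero_of_apply_eq_zero {s : Fin 3} {n : Fin 3 → ℕ}
    (hs : n s = 0) (c : ℕ) : runCompositionCount s n c = 0 :=
  prod_eq_zero (mem_univ s) (by simp [hs, compositionCount])

theorem runCompositionCount_single (s : Fin 3) (c : ℕ) :
    runCompositionCount s (Pi.single s 1) c = if s = 2 ∧ c = 0 then 1 else 0 := by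
  fin_cases s <;> rcases c with _ | c <;>
    simp [runCompositionCount, Fin.prod_univ_three, compositionCount]

theorem card_trajectories (N : ℕ) (s : Fin 3) (n : Fin 3 → ℕ) (c : ℕ)
    (hn : ∑ j, n j = N + 1) : #(trajectories N s n c) = runCompositionCount s n c := by
  induction N using Nat.strong_induction_on generalizing s n c with
  | _ N ih =>
  rcases eq_or_ne (n s) 0 with hs | hs
  · rw [card_trajectories_eq_zero_of_apply_eq_zero hs,
      runCompositionCount_eq_zero_of_apply_eq_zero hs]
  obtain ⟨n, rfl⟩ := Pi.exists_eq_add_single hs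
  replace hn : ∑ j, n j = N := by simpa [sum_add_distrib] using hn
  rcases N with _ | N
  · obtain rfl : n = 0 := funext fun j => sum_eq_zero_iff.1 hn j (mem_univ j)
    rw [zero_add (Pi.single s 1), card_trajectories_zero, runCompositionCount_single]
  by_cases h : s = 2 ∧ c = 0
  · obtain ⟨rfl, rfl⟩ := h
    rw [card_trajectories_succ_two_zero, ih N (by omega) _ _ _ hn,
      runCompositionCount_two_zero (by omega)]
  obtain ⟨c, rfl⟩ : ∃ c', c = c' + if s = 2 then 1 else 0 :=
    ⟨c - if s = 2 then 1 else 0, by split_ifs at h ⊢ <;> omega⟩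
  rw [card_trajectories_succ, ih N (by omega) _ _ _ hn, ih N (by omega) _ _ _ hn,
    runCompositionCount_succ]

end Qutrit

theorem qutrit_multiplicity_general (N n0 n1 n2 c : ℕ)
    (h0 : 1 ≤ n0) (h1 : 1 ≤ n1) (h2 : 1 ≤ n2) (hsum : n0 + n1 + n2 = N + 1) :
    (Finset.univ.filter (fun ψ : Fin (N + 1) → Fin 3 =>
        ψ 0 = 0 ∧ ψ (Fin.last N) = 2 ∧
        (Finset.univ.filter (fun k : Fin (N + 1) => ψ k = 0)).card = n0 ∧
        (Finset.univ.filter (fun k : Fin (N + 1) => ψ k = 1)).card = n1 ∧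
        (Finset.univ.filter (fun k : Fin (N + 1) => ψ k = 2)).card = n2 ∧
        (∀ k : Fin N, ¬(ψ k.castSucc = 0 ∧ ψ k.succ = 2)) ∧
        (∀ k : Fin N, ¬(ψ k.castSucc = 1 ∧ ψ k.succ = 0)) ∧
        (∀ k : Fin N, ¬(ψ k.castSucc = 2 ∧ ψ k.succ = 1)) ∧
        (Finset.univ.filter
          (fun k : Fin N => ψ k.castSucc = 2 ∧ ψ k.succ = 0)).card = c)).card
      = Nat.choose (n0 - 1) c * Nat.choose (n1 - 1) c * Nat.choose (n2 - 1) c := by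
  have hformula : Qutrit.runCompositionCount 0 ![n0, n1, n2] c =
      (n0 - 1).choose c * (n1 - 1).choose c * (n2 - 1).choose c := by
    simp [Qutrit.runCompositionCount, Fin.prod_univ_three, compositionCount_eq_choose,
      Nat.one_le_iff_ne_zero.1, *]
  rw [← hformula, ← Qutrit.card_trajectories N 0 _ c (by simp [Fin.sum_univ_three, hsum])]
  congr 1
  ext ψ
  simp [Qutrit.trajectories, Qutrit.paths, Qutrit.occupation, Qutrit.feedbackCount,
    Qutrit.ladderStep_iff, funext_iff, Fin.forall_fin_succ, forall_and]
  tauto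

/-- Qutrit trajectory multiplicity: the number of trajectories `ψ : Fin (N+1) → Fin 3`
from `0` to `2` with occupation counts `n₀, n₁, n₂`, no forbidden steps `0→2`, `1→0`,
`2→1`, and exactly `c` feedback steps `2→0`, equals
`C(n₀−1, c) · C(n₁−1, c) · C(n₂−1, c)`. -/
theorem qutrit_multiplicity (N n0 n1 n2 c : ℕ) (hN : 2 ≤ N)
    (h0 : 1 ≤ n0) (h1 : 1 ≤ n1) (h2 : 1 ≤ n2) (hsum : n0 + n1 + n2 = N + 1)
    (hc : c ≤ min n0 (min n1 n2) - 1) :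
    (Finset.univ.filter (fun ψ : Fin (N + 1) → Fin 3 =>
        ψ 0 = 0 ∧ ψ (Fin.last N) = 2 ∧
        (Finset.univ.filter (fun k : Fin (N + 1) => ψ k = 0)).card = n0 ∧
        (Finset.univ.filter (fun k : Fin (N + 1) => ψ k = 1)).card = n1 ∧
        (Finset.univ.filter (fun k : Fin (N + 1) => ψ k = 2)).card = n2 ∧
        (∀ k : Fin N, ¬(ψ k.castSucc = 0 ∧ ψ k.succ = 2)) ∧
        (∀ k : Fin N, ¬(ψ k.castSucc = 1 ∧ ψ k.succ = 0)) ∧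
        (∀ k : Fin N, ¬(ψ k.castSucc = 2 ∧ ψ k.succ = 1)) ∧
        (Finset.univ.filter
          (fun k : Fin N => ψ k.castSucc = 2 ∧ ψ k.succ = 0)).card = c)).card
      = Nat.choose (n0 - 1) c * Nat.choose (n1 - 1) c * Nat.choose (n2 - 1) c :=
  qutrit_multiplicity_general N n0 n1 n2 c h0 h1 h2 hsum
end

section
/- ε-independence of the qutrit common-rotation expected return: let N ≥ 2 and x ∈ ℝ. For ε ∈ ℝ define J_ε(x) = Σ_{n₀=1}^{N−1} Σ_{n₂=1}^{N−n₀} Σ_{c=0}^{min(n₀, N+1−n₀−n₂, n₂)−1} C(n₀−1, c)·C(N−n₀−n₂, c)·C(n₂−1, c) · [ (ε(N+1−2n₀−n₂) − (N+2−n₀−2n₂))·x + 1 ] · (1−x)^{N−3c−2} · x^{3c+2}. Then for every ε, J_ε(x) = Σ_{n₀=1}^{N−1} Σ_{n₂=1}^{N−n₀} Σ_{c=0}^{min(n₀, N+1−n₀−n₂, n₂)−1} C(n₀−1, c)·C(N−n₀−n₂, c)·C(n₂−1, c) · [ (n₀ + 2n₂ − N − 2)·x + 1 ] · (1−x)^{N−3c−2}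 · x^{3c+2}; in particular J_ε(x) is independent of ε. -/
/-!
Write `n₁ = N + 1 - n₀ - n₂`. The summand for `(n₀, n₂)` is a weight `w(n₀, n₁, n₂)`, symmetric in
`n₀, n₁`, times `(n₁ - n₀) ε x` plus an `ε`-free term. The reflection `(n₀, n₂) ↦ (n₁, n₂)` maps the
summation triangle onto itself, so the `ε`-part is an antisymmetric sum and vanishes.
-/

open Finset

theorem sum_triangle_reflect {M : Type*} [AddCommMonoid M] (N : ℕ) (f : ℕ → ℕ → M) :
    ∑ a ∈ Icc 1 (N - 1), ∑ b ∈ Icc 1 (N - a), f (N + 1 - a - b) b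
      = ∑ a ∈ Icc 1 (N - 1), ∑ b ∈ Icc 1 (N - a), f a b := by
  simp only [sum_sigma']
  refine sum_nbij' (fun p => ⟨N + 1 - p.1 - p.2, p.2⟩) (fun p => ⟨N + 1 - p.1 - p.2, p.2⟩)
    ?_ ?_ ?_ ?_ fun _ _ => rfl <;>
  · rintro ⟨a, b⟩ h
    simp only [mem_sigma, mem_Icc] at h
    simp only [mem_sigma, mem_Icc, Sigma.mk.injEq, heq_eq_eq, and_true]
    omega

theorem sum_triangle_eq_zero_of_antisymm {M : Type*} [AddCommGroup M] [IsAddTorsionFree M]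
    (N : ℕ) (g : ℕ → ℕ → M)
    (hg : ∀ a b, 1 ≤ a → 1 ≤ b → a + b ≤ N → g (N + 1 - a - b) b = -g a b) :
    ∑ a ∈ Icc 1 (N - 1), ∑ b ∈ Icc 1 (N - a), g a b = 0 := by
  rw [← self_eq_neg]
  conv_lhs => rw [← sum_triangle_reflect]
  simp only [← sum_neg_distrib]
  refine sum_congr rfl fun a ha => sum_congr rfl fun b hb => ?_
  simp only [mem_Icc] at ha hb
  exact hg a b (by omega) (by omega) (by omega)

noncomputable def levelWeight (N : ℕ) (x : ℝ) (n₀ n₁ n₂ : ℕ) : ℝ :=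
  ∑ c ∈ range (min n₀ (min n₁ n₂)),
    ((Nat.choose (n₀ - 1) c * Nat.choose (n₁ - 1) c * Nat.choose (n₂ - 1) c : ℕ) : ℝ)
      * (1 - x) ^ (N - 3 * c - 2) * x ^ (3 * c + 2)

theorem levelWeight_swap (N : ℕ) (x : ℝ) (n₀ n₁ n₂ : ℕ) :
    levelWeight N x n₁ n₀ n₂ = levelWeight N x n₀ n₁ n₂ := by
  rw [levelWeight, levelWeight, min_left_comm]
  simp only [Nat.mul_comm (Nat.choose (n₁ - 1) _)]

theorem qutrit_common_rotation_eps_independence_general (N : ℕ) (x ε : ℝ) :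
    (∑ n0 ∈ Finset.Icc 1 (N - 1), ∑ n2 ∈ Finset.Icc 1 (N - n0),
        ∑ c ∈ Finset.range (min n0 (min (N + 1 - n0 - n2) n2)),
          ((Nat.choose (n0 - 1) c * Nat.choose (N - n0 - n2) c
              * Nat.choose (n2 - 1) c : ℕ) : ℝ)
            * ((ε * ((N : ℝ) + 1 - 2 * (n0 : ℝ) - (n2 : ℝ))
                  - ((N : ℝ) + 2 - (n0 : ℝ) - 2 * (n2 : ℝ))) * x + 1)
            * (1 - x) ^ (N - 3 * c - 2) * x ^ (3 * c + 2))
    = ∑ n0 ∈ Finset.Icc 1 (N - 1), ∑ n2 ∈ Finset.Icc 1 (N - n0),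
        ∑ c ∈ Finset.range (min n0 (min (N + 1 - n0 - n2) n2)),
          ((Nat.choose (n0 - 1) c * Nat.choose (N - n0 - n2) c
              * Nat.choose (n2 - 1) c : ℕ) : ℝ)
            * (((n0 : ℝ) + 2 * (n2 : ℝ) - (N : ℝ) - 2) * x + 1)
            * (1 - x) ^ (N - 3 * c - 2) * x ^ (3 * c + 2) := by
  set g : ℕ → ℕ → ℝ := fun a b =>
    ε * x * (((N : ℝ) + 1 - 2 * a - b) * levelWeight N x a (N + 1 - a - b) b) with hg_def
  have hg : ∑ a ∈ Icc 1 (N - 1), ∑ b ∈ Icc 1 (N - a), g a b = 0 := by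
    refine sum_triangle_eq_zero_of_antisymm N g fun a b _ _ hab => ?_
    have hn₁ : N + 1 - (N + 1 - a - b) - b = a := by omega
    have hcast : ((N + 1 - a - b : ℕ) : ℝ) = N + 1 - a - b := by
      rw [Nat.cast_sub (by omega), Nat.cast_sub (by omega)]; push_cast; ring
    simp only [hg_def, hn₁, hcast, levelWeight_swap]
    ring
  rw [← sub_eq_zero, ← hg, ← sum_sub_distrib]
  refine sum_congr rfl fun a _ => ?_
  rw [← sum_sub_distrib]
  refine sum_congr rfl fun b _ => ?_
  have hn₁ : N - a - b = N + 1 - a - b - 1 := by omega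
  simp only [hg_def, levelWeight, hn₁, mul_sum, ← sum_sub_distrib]
  exact sum_congr rfl fun c _ => by ring

/-- ε-independence of the qutrit common-rotation expected return: the ε-dependent
expression for `J_ε(x)` equals the manifestly ε-free expression, for every `ε`. -/
theorem qutrit_common_rotation_eps_independence (N : ℕ) (hN : 2 ≤ N) (x ε : ℝ) :
    (∑ n0 ∈ Finset.Icc 1 (N - 1), ∑ n2 ∈ Finset.Icc 1 (N - n0),
        ∑ c ∈ Finset.range (min n0 (min (N + 1 - n0 - n2) n2)),
          ((Nat.choose (n0 - 1) c * Nat.choose (N - n0 - n2) c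
              * Nat.choose (n2 - 1) c : ℕ) : ℝ)
            * ((ε * ((N : ℝ) + 1 - 2 * (n0 : ℝ) - (n2 : ℝ))
                  - ((N : ℝ) + 2 - (n0 : ℝ) - 2 * (n2 : ℝ))) * x + 1)
            * (1 - x) ^ (N - 3 * c - 2) * x ^ (3 * c + 2))
    = ∑ n0 ∈ Finset.Icc 1 (N - 1), ∑ n2 ∈ Finset.Icc 1 (N - n0),
        ∑ c ∈ Finset.range (min n0 (min (N + 1 - n0 - n2) n2)),
          ((Nat.choose (n0 - 1) c * Nat.choose (N - n0 - n2) c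
              * Nat.choose (n2 - 1) c : ℕ) : ℝ)
            * (((n0 : ℝ) + 2 * (n2 : ℝ) - (N : ℝ) - 2) * x + 1)
            * (1 - x) ^ (N - 3 * c - 2) * x ^ (3 * c + 2) :=
  qutrit_common_rotation_eps_independence_general N x ε
end

section
/- Brute-force equals analytic formula for the qutrit common-rotation model: let N ≥ 2, x ∈ ℝ and ε ∈ ℝ. Define step weights q on Fin 3 × Fin 3 by q(0,0) = 1−x, q(0,1) = x, q(1,1) = 1−x, q(1,2) = x, q(2,0) = x, q(2,2) = 1−x, and q(i,j) = 0 for the remaining pairs; define step rewards r by r(0,0) = −εx, r(0,1) = ε(1−x), r(1,1) = −(1−ε)x, r(1,2) = (1−ε)(1−x), r(2,0) = −(1−x), r(2,2) = x (values of r on pairs with q = 0 are irrelevant, e.g. set to 0). Then Σ over all trajectories ψ : Fin (N+1) → Fin 3 with ψ(0) = 0 and ψ(N) = 2 of [ (Σ_{k<N} r(ψ(k), ψ(k+1))) · ∏_{k<N} q(ψ(k), ψ(k+1)) ] equals Σ_{n₀=1}^{N−1} Σ_{n₂=1}^{N−n₀} Σ_{c=0}^{min(n₀, N+1−n₀−n₂,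 n₂)−1} C(n₀−1, c)·C(N−n₀−n₂, c)·C(n₂−1, c)·[ (n₀ + 2n₂ − N − 2)·x + 1 ]·(1−x)^{N−3c−2}·x^{3c+2}. In particular the left-hand side, nominally a sum over 3^{N−1} trajectories, equals an ε-independent sum of O(N³) terms. -/
open scoped BigOperators

/-- Step transition probabilities `q(i,j) = |⟨j|π_i|i⟩|²` of the qutrit ladder model with
common rotation parameter `x = sin²θ`: nonzero only on the allowed transitions
`0→0, 0→1, 1→1, 1→2, 2→0, 2→2`. -/
noncomputable def qutritQ (x : ℝ) : Matrix (Fin 3) (Fin 3) ℝ :=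
  !![1 - x, x, 0;
     0, 1 - x, x;
     x, 0, 1 - x]

/-- Step rewards `r(i,j) = E_j − ⟨π_i i|H|π_i i⟩` of the qutrit ladder model with energies
`E₀ = 0`, `E₁ = ε`, `E₂ = 1` and common rotation parameter `x` (set to `0` on the
forbidden transitions, where `q = 0`). -/
noncomputable def qutritR (ε x : ℝ) : Matrix (Fin 3) (Fin 3) ℝ :=
  !![-(ε * x), ε * (1 - x), 0;
     0, -((1 - ε) * x), (1 - ε) * (1 - x);
     -(1 - x), 0, x]

/-!
Summing over trajectories one step at a time gives `(Q ^ n) i j` for the total weight and, for the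
reward-weighted sum `W n`, the recursion `W (n + 1) = W n * Q + Q ^ n * (R ⊙ Q)`. Since
`Q = x • T + (1 - x) • 1` with `T` the cyclic shift of `Fin 3`, `(Q ^ n) 0 j` is the binomial mass
of the exponents `u ≡ j [MOD 3]`, and the recursion closes on the row `0` of `W`, giving
`W N 0 2 = (1 - x) * (Q ^ N) 0 2`, in which `ε` has cancelled.

On the analytic side, put `n0 = a + 1`, `n2 = b + 1`, `N - n0 - n2 = m`, so that `a + b + m = N - 2`.
The weight becomes `(1 - x) + x * (b - m)`. The first part sums to `C(N, 3c + 2)` by applying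
`∑_{i + j = M} C(i, p) C(j, q) = C(M + 1, p + q + 1)` twice, and the second vanishes under `b ↔ m`.
-/

open Finset Matrix

section Paths

variable {α : Type*}

@[to_additive]
lemma prod_steps_snoc {M : Type*} [CommMonoid M] {n : ℕ} (f : α → α → M)
    (φ : Fin (n + 1) → α) (j : α) :
    ∏ k : Fin (n + 1), f (Fin.snoc (α := fun _ => α) φ j k.castSucc)
        (Fin.snoc (α := fun _ => α) φ j k.succ)
      = (∏ k : Fin n, f (φ k.castSucc) (φ k.succ)) * f (φ (Fin.last n)) j := by
  rw [Fin.prod_univ_castSucc]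
  simp only [Fin.snoc_castSucc, Fin.succ_castSucc, Fin.succ_last, Fin.snoc_last]

variable [Fintype α] [DecidableEq α]

def paths (n : ℕ) (i j : α) : Finset (Fin (n + 1) → α) :=
  univ.filter fun ψ => ψ 0 = i ∧ ψ (Fin.last n) = j

lemma sum_paths_succ {M : Type*} [AddCommMonoid M] (n : ℕ) (i j : α)
    (f : (Fin (n + 2) → α) → M) :
    ∑ ψ ∈ paths (n + 1) i j, f ψ
      = ∑ l, ∑ φ ∈ paths n i l, f (Fin.snoc (α := fun _ => α) φ j) := by
  simp only [paths, sum_filter]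
  rw [← (Fin.snocEquiv fun _ => α).sum_comp, Fintype.sum_prod_type]
  simp only [Fin.snocEquiv, Equiv.coe_fn_mk]
  rw [Finset.sum_comm]
  conv_rhs => rw [Finset.sum_comm]
  refine Finset.sum_congr rfl fun φ _ => ?_
  by_cases h : φ 0 = i <;> simp [h]

variable {S : Type*} [CommSemiring S]

lemma sum_paths_prod_eq_pow (Q : Matrix α α S) (n : ℕ) (i j : α) :
    ∑ ψ ∈ paths n i j, ∏ k : Fin n, Q (ψ k.castSucc) (ψ k.succ) = (Q ^ n) i j := by
  induction n generalizing j with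
  | zero =>
    rw [paths, sum_filter, ← (Equiv.funUnique (Fin 1) α).symm.sum_comp]
    simp [Matrix.one_apply, ite_and]
  | succ n ih =>
    rw [sum_paths_succ, pow_succ, mul_apply]
    refine Finset.sum_congr rfl fun l _ => ?_
    rw [← ih, sum_mul]
    refine Finset.sum_congr rfl fun φ hφ => ?_
    rw [prod_steps_snoc (f := Q), (mem_filter.1 hφ).2.2]

def pathReward (Q R : Matrix α α S) (n : ℕ) : Matrix α α S :=
  Matrix.of fun i j => ∑ ψ ∈ paths n i j,
    (∑ k : Fin n, R (ψ k.castSucc) (ψ k.succ)) * ∏ k : Fin n, Q (ψ k.castSucc) (ψ k.succ)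

lemma pathReward_zero (Q R : Matrix α α S) : pathReward Q R 0 = 0 := by
  ext i j
  simp [pathReward]

lemma pathReward_succ (Q R : Matrix α α S) (n : ℕ) :
    pathReward Q R (n + 1) = pathReward Q R n * Q + Q ^ n * (R ⊙ Q) := by
  ext i j
  rw [Matrix.add_apply, mul_apply, mul_apply, ← sum_add_distrib]
  simp only [pathReward, of_apply, hadamard_apply, sum_paths_succ]
  refine Finset.sum_congr rfl fun l _ => ?_
  rw [← sum_paths_prod_eq_pow, sum_mul, sum_mul, ← sum_add_distrib]
  refine Finset.sum_congr rfl fun φ hφ => ?_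
  rw [prod_steps_snoc (f := Q), sum_steps_snoc (f := R), (mem_filter.1 hφ).2.2]
  ring

end Paths

section Translation

variable {G : Type*} [AddMonoid G] [Fintype G] [DecidableEq G]

def translationMatrix (R : Type*) [Zero R] [One R] (g : G) : Matrix G G R :=
  Matrix.of fun i j => if j = i + g then 1 else 0

variable {R : Type*} [CommSemiring R]

lemma translationMatrix_pow_apply (g : G) (u : ℕ) (i j : G) :
    (translationMatrix R g ^ u) i j = if j = i + u • g then 1 else 0 := by
  induction u generalizing j with
  | zero => simp [Matrix.one_apply, eq_comm]
  | succ u ih =>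
    rw [pow_succ, mul_apply]
    simp only [ih]
    simp only [translationMatrix, of_apply, ite_mul, one_mul, zero_mul, sum_ite_eq',
      mem_univ, if_true, succ_nsmul, add_assoc]

lemma smul_translationMatrix_add_smul_one_pow_apply (a b : R) (g : G) (n : ℕ) (i j : G) :
    ((b • translationMatrix R g + a • 1) ^ n) i j
      = ∑ u ∈ range (n + 1), if j = i + u • g then b ^ u * a ^ (n - u) * n.choose u else 0 := by
  rw [(((Commute.one_right _).smul_right a).smul_left b).add_pow, Matrix.sum_apply]
  refine Finset.sum_congr rfl fun u _ => ?_
  simp only [smul_pow, one_pow, Algebra.mul_smul_comm, mul_one, ← nsmul_eq_mul', Matrix.smul_apply,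
    translationMatrix_pow_apply, smul_ite, smul_eq_mul, mul_ite, mul_zero, nsmul_eq_mul]
  split_ifs <;> ring

end Translation

lemma Fin.val_nsmul {m : ℕ} [NeZero m] (u : ℕ) (a : Fin m) : (u • a).val = u * a.val % m := by
  induction u with
  | zero => simp
  | succ u ih => rw [succ_nsmul, Fin.val_add, ih, Nat.mod_add_mod, Nat.succ_mul]

lemma qutritQ_eq_smul_translationMatrix_add (x : ℝ) :
    qutritQ x = x • translationMatrix ℝ (1 : Fin 3) + (1 - x) • 1 := by
  ext i j
  fin_cases i <;> fin_cases j <;> simp [qutritQ, translationMatrix]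

lemma qutritQ_pow_apply_zero_two (x : ℝ) (n : ℕ) :
    (qutritQ x ^ n) 0 2
      = ∑ c ∈ range ((n + 1) / 3),
          n.choose (3 * c + 2) * x ^ (3 * c + 2) * (1 - x) ^ (n - (3 * c + 2)) := by
  have h_two (u : ℕ) : (2 : Fin 3) = 0 + u • 1 ↔ u % 3 = 2 := by
    rw [zero_add, Fin.ext_iff, Fin.val_nsmul]
    simp [eq_comm]
  simp only [qutritQ_eq_smul_translationMatrix_add, smul_translationMatrix_add_smul_one_pow_apply,
    h_two, ← sum_filter]
  symm
  refine sum_nbij' (3 * · + 2) (· / 3) ?_ ?_ ?_ ?_ (fun _ _ => by ring) <;>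
    intro _ h <;> simp only [mem_filter, mem_range] at h ⊢ <;> omega

lemma qutrit_pathReward_zero_apply (ε x : ℝ) (n : ℕ) :
    pathReward (qutritQ x) (qutritR ε x) n 0 0 = -(ε * (1 - x)) * (qutritQ x ^ n) 0 1
      ∧ pathReward (qutritQ x) (qutritR ε x) n 0 1
        = (1 - x) * (ε * (qutritQ x ^ n) 0 1 - (qutritQ x ^ n) 0 2)
      ∧ pathReward (qutritQ x) (qutritR ε x) n 0 2 = (1 - x) * (qutritQ x ^ n) 0 2 := by
  induction n with
  | zero => simp [pathReward_zero]
  | succ n ih =>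
    obtain ⟨h0, h1, h2⟩ := ih
    simp only [pathReward_succ, pow_succ, Matrix.add_apply, mul_apply, hadamard_apply,
      Fin.sum_univ_three, h0, h1, h2]
    simp only [qutritQ, qutritR, of_apply, cons_val', cons_val_zero, cons_val_one,
      cons_val_fin_one, Matrix.cons_val]
    refine ⟨by ring, by ring, by ring⟩

section Binomial

open Finset.Nat

lemma Nat.sum_antidiagonal_choose_mul_choose (p q M : ℕ) :
    ∑ ij ∈ antidiagonal M, ij.1.choose p * ij.2.choose q = (M + 1).choose (p + q + 1) := by
  induction M generalizing q with
  | zero =>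
    rw [antidiagonal_zero, sum_singleton]
    rcases p with _ | p <;> rcases q with _ | q <;> simp [Nat.choose_succ_succ, ← add_assoc]
  | succ M ih =>
    rw [sum_antidiagonal_succ']
    rcases q with _ | q
    · have h := ih 0
      simp only [Nat.choose_zero_right, mul_one] at h ⊢
      rw [h, add_zero, Nat.choose_succ_succ' (M + 1)]
    · simp only [Nat.choose_succ_succ' _ q, Nat.choose_zero_succ, mul_zero, zero_add, mul_add,
        sum_add_distrib, ih]
      rw [Nat.choose_succ_succ' (M + 1) (p + (q + 1))]
      ring_nf

lemma Nat.sum_antidiagonal_sum_antidiagonal_choose (p q r M : ℕ) :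
    ∑ a ∈ antidiagonal M, ∑ b ∈ antidiagonal a.2, a.1.choose p * b.1.choose q * b.2.choose r
      = (M + 2).choose (p + q + r + 2) := by
  have h := Nat.sum_antidiagonal_choose_mul_choose p (q + r + 1) (M + 1)
  rw [sum_antidiagonal_succ', Nat.choose_zero_succ, mul_zero, zero_add] at h
  simp only [mul_assoc, ← mul_sum, Nat.sum_antidiagonal_choose_mul_choose]
  simpa [add_assoc] using h

lemma sum_antidiagonal_mul_mul_sub {R : Type*} [CommRing R] (f : ℕ → R) (k : ℕ) :
    ∑ ij ∈ antidiagonal k, f ij.1 * f ij.2 * ((ij.1 : R) - ij.2) = 0 := by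
  simp only [mul_sub, sum_sub_distrib, sub_eq_zero]
  rw [← sum_antidiagonal_swap]
  simp [mul_comm]

end Binomial

lemma sum_Icc_one_eq_sum_antidiagonal {M : Type*} [AddCommMonoid M] (K : ℕ) (g : ℕ → M) :
    ∑ n ∈ Icc 1 (K + 1), g n = ∑ p ∈ antidiagonal K, g (p.1 + 1) := by
  rw [Nat.sum_antidiagonal_eq_sum_range_succ_mk, range_eq_Ico, sum_Ico_add' g]
  rfl

lemma sum_range_choose_mul_choose_mul_choose_of_le {R : Type*} [Semiring R] {a b m L K : ℕ}
    (hL : min a (min b m) < L) (hLK : L ≤ K) (w : ℕ → R) :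
    ∑ c ∈ range L, (a.choose c * b.choose c * m.choose c : R) * w c
      = ∑ c ∈ range K, (a.choose c * b.choose c * m.choose c : R) * w c := by
  refine sum_subset (range_subset_range.2 hLK) fun c _ hc => ?_
  have hc : L ≤ c := by simpa using hc
  rcases lt_or_ge a c with h | h
  · simp [Nat.choose_eq_zero_of_lt h]
  rcases lt_or_ge b c with h' | h'
  · simp [Nat.choose_eq_zero_of_lt h']
  · simp [Nat.choose_eq_zero_of_lt (show m < c by omega)]

lemma sum_antidiagonal_sum_antidiagonal_choose_mul_weight (c M : ℕ) (x : ℝ) :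
    ∑ p ∈ antidiagonal M, ∑ q ∈ antidiagonal p.2,
        (p.1.choose c * q.2.choose c * q.1.choose c : ℝ) * (((q.1 : ℝ) - q.2 - 1) * x + 1)
      = (M + 2).choose (3 * c + 2) * (1 - x) := by
  have h_count : ∑ p ∈ antidiagonal M, ∑ q ∈ antidiagonal p.2,
      (p.1.choose c * q.1.choose c * q.2.choose c : ℝ) = (M + 2).choose (3 * c + 2) := by
    rw [show 3 * c + 2 = c + c + c + 2 by ring, ← Nat.sum_antidiagonal_sum_antidiagonal_choose]
    push_cast
    rfl
  have h_split (p q : ℕ × ℕ) : (p.1.choose c * q.2.choose c * q.1.choose c : ℝ)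
        * (((q.1 : ℝ) - q.2 - 1) * x + 1)
      = (1 - x) * (p.1.choose c * q.1.choose c * q.2.choose c)
        + x * p.1.choose c * ((q.1.choose c * q.2.choose c) * ((q.1 : ℝ) - q.2)) := by
    ring
  simp only [h_split, sum_add_distrib, ← mul_sum, h_count,
    sum_antidiagonal_mul_mul_sub fun k => (k.choose c : ℝ), mul_zero, sum_const_zero]
  ring

lemma qutrit_analytic_sum_eq (N : ℕ) (hN : 2 ≤ N) (x : ℝ) :
    ∑ n0 ∈ Icc 1 (N - 1), ∑ n2 ∈ Icc 1 (N - n0),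
        ∑ c ∈ range (min n0 (min (N + 1 - n0 - n2) n2)),
          ((Nat.choose (n0 - 1) c * Nat.choose (N - n0 - n2) c
              * Nat.choose (n2 - 1) c : ℕ) : ℝ)
            * (((n0 : ℝ) + 2 * (n2 : ℝ) - (N : ℝ) - 2) * x + 1)
            * (1 - x) ^ (N - 3 * c - 2) * x ^ (3 * c + 2)
      = (1 - x) * ∑ c ∈ range ((N + 1) / 3),
          N.choose (3 * c + 2) * x ^ (3 * c + 2) * (1 - x) ^ (N - (3 * c + 2)) := by
  obtain ⟨M, rfl⟩ := Nat.exists_eq_add_of_le' hN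
  calc _ = ∑ p ∈ antidiagonal M, ∑ q ∈ antidiagonal p.2, ∑ c ∈ range ((M + 2 + 1) / 3),
        (p.1.choose c * q.2.choose c * q.1.choose c : ℝ) * ((((q.1 : ℝ) - q.2 - 1) * x + 1)
          * (x ^ (3 * c + 2) * (1 - x) ^ (M + 2 - (3 * c + 2)))) := by
        -- `n0 = p.1 + 1`, `n2 = q.1 + 1`, `N - n0 - n2 = q.2`
        rw [show M + 2 - 1 = M + 1 by omega, sum_Icc_one_eq_sum_antidiagonal]
        refine sum_congr rfl fun p hp => ?_
        have hp := mem_antidiagonal.1 hp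
        rw [show M + 2 - (p.1 + 1) = p.2 + 1 by omega, sum_Icc_one_eq_sum_antidiagonal]
        refine sum_congr rfl fun q hq => ?_
        have hq := mem_antidiagonal.1 hq
        rw [show p.2 + 1 - (q.1 + 1) = q.2 by omega,
          show M + 2 + 1 - (p.1 + 1) - (q.1 + 1) = q.2 + 1 by omega, Nat.add_sub_cancel,
          Nat.add_sub_cancel]
        have hM : (M : ℝ) = p.1 + q.1 + q.2 := by norm_cast; omega
        rw [← sum_range_choose_mul_choose_mul_choose_of_le
          (L := min (p.1 + 1) (min (q.2 + 1) (q.1 + 1))) (by omega) (by omega)]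
        refine sum_congr rfl fun c _ => ?_
        rw [show M + 2 - 3 * c - 2 = M + 2 - (3 * c + 2) by omega]
        push_cast
        rw [hM]
        ring
    _ = ∑ c ∈ range ((M + 2 + 1) / 3), (∑ p ∈ antidiagonal M, ∑ q ∈ antidiagonal p.2,
        (p.1.choose c * q.2.choose c * q.1.choose c : ℝ) * (((q.1 : ℝ) - q.2 - 1) * x + 1))
          * (x ^ (3 * c + 2) * (1 - x) ^ (M + 2 - (3 * c + 2))) := by
        simp only [mul_assoc, sum_mul]
        rw [sum_congr rfl fun p _ => sum_comm, sum_comm]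
    _ = _ := by
        simp only [sum_antidiagonal_sum_antidiagonal_choose_mul_weight, mul_sum]
        refine sum_congr rfl fun c _ => ?_
        ring

/-- Brute-force equals analytic formula for the qutrit common-rotation model: the sum over
all `3^{N−1}` trajectories from `0` to `2` of (total reward) × (trajectory probability)
equals the ε-independent `O(N³)`-term combinatorial sum. -/
theorem qutrit_bruteforce_eq_analytic (N : ℕ) (hN : 2 ≤ N) (x ε : ℝ) :
    ∑ ψ ∈ Finset.univ.filter (fun ψ : Fin (N + 1) → Fin 3 =>
        ψ 0 = 0 ∧ ψ (Fin.last N) = 2),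
      (∑ k : Fin N, qutritR ε x (ψ k.castSucc) (ψ k.succ))
        * ∏ k : Fin N, qutritQ x (ψ k.castSucc) (ψ k.succ)
    = ∑ n0 ∈ Finset.Icc 1 (N - 1), ∑ n2 ∈ Finset.Icc 1 (N - n0),
        ∑ c ∈ Finset.range (min n0 (min (N + 1 - n0 - n2) n2)),
          ((Nat.choose (n0 - 1) c * Nat.choose (N - n0 - n2) c
              * Nat.choose (n2 - 1) c : ℕ) : ℝ)
            * (((n0 : ℝ) + 2 * (n2 : ℝ) - (N : ℝ) - 2) * x + 1)
            * (1 - x) ^ (N - 3 * c - 2) * x ^ (3 * c + 2) := by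
  change pathReward (qutritQ x) (qutritR ε x) N 0 2 = _
  rw [(qutrit_pathReward_zero_apply ε x N).2.2, qutritQ_pow_apply_zero_two,
    qutrit_analytic_sum_eq N hN]
end
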